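/- For any finite rooted plane tree T, the height of T is at most 3 times the sum over all nodes v of T of 1/S(v), where S(v) is the breadth-first queue length just before v is explored. -/

import Mathlib

inductive PlaneTree : Type
  | node : List PlaneTree → PlaneTree

namespace PlaneTree

def children : PlaneTree → List PlaneTree
  | node ts => ts

mutual
  def height : PlaneTree → ℕ
    | node ts => heightList ts
  def heightList : List PlaneTree → ℕ
    | [] => 0
    | t :: ts => max (height t + 1) (heightList ts)
end

mutual
  def size : PlaneTree → ℕ
    | node ts => 1 + sizeList ts
  def sizeList : List PlaneTree → ℕ
    | [] => 0
    | t :: ts => size t + sizeList ts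
end

def level : ℕ → PlaneTree → List PlaneTree
  | 0, t => [t]
  | n + 1, t => (children t).flatMap (level n)

def bfsList (t : PlaneTree) : List PlaneTree :=
  (List.range (height t + 1)).flatMap (fun n => level n t)

def S (t : PlaneTree) (i : ℕ) : ℤ :=
  1 + ∑ j ∈ Finset.range i, ((((bfsList t).getD j (node [])).children.length : ℤ) - 1)

def width (t : PlaneTree) : ℕ :=
  (Finset.range (height t + 1)).sup (fun n => (level n t).length)

end PlaneTree

/-!
List the nodes level by level and let `n k` be the size of level `k`. Just before the `j`-th
node of level `k` is explored, the queue holds the `n k - j` unexplored nodes of level `k`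
together with the children of the first `j` of them, which are at most `n (k + 1)`; hence
`S ≤ n k - j + n (k + 1)`. As `log (x + 1) - log x ≤ 1 / x`, level `k` contributes at least
`log ((n k + n (k + 1) + 1) / (n (k + 1) + 1))`, and since `2xy ≤ (x + y - 1)²` and
`log 2 > 2/3` this is at least `1/3 + (log (n k + 1) - log (n (k + 1) + 1)) / 2`.
Summing over the `height + 1` nonempty levels, the logarithms telescope to a nonnegative
quantity, leaving `(height + 1) / 3`.
-/

section

open Real Finset

lemma sum_range_getD_eq_sum_take {α M : Type*} [AddCommMonoid M] (l : List α) (d : α)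
    (f : α → M) {i : ℕ} (hi : i ≤ l.length) :
    ∑ j ∈ range i, f (l.getD j d) = ((l.take i).map f).sum := by
  induction i with
  | zero => simp
  | succ i ih =>
    rw [sum_range_succ, ih (by omega), List.map_take, List.map_take,
      List.sum_take_succ _ _ (by simpa using hi), List.getD_eq_getElem _ _ (by omega),
      List.getElem_map]

lemma log_add_one_sub_log_le_inv {x : ℝ} (hx : 0 < x) : log (x + 1) - log x ≤ 1 / x := by
  have h := log_le_sub_one_of_pos (div_pos (by linarith : 0 < x + 1) hx)
  rw [log_div (by linarith) hx.ne'] at h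
  calc log (x + 1) - log x ≤ (x + 1) / x - 1 := h
    _ = 1 / x := by field_simp; ring

lemma log_sub_log_le_sum_inv {b : ℝ} (hb : 0 ≤ b) (a : ℕ) :
    log (a + b + 1) - log (b + 1) ≤ ∑ j ∈ range a, 1 / ((a : ℝ) - j + b) := by
  induction a with
  | zero => simp
  | succ a ih =>
    have hstep := log_add_one_sub_log_le_inv (by positivity : (0 : ℝ) < a + b + 1)
    rw [sum_range_succ']
    push_cast
    simp only [add_sub_add_right_eq_sub, sub_zero, show (a : ℝ) + 1 + b = a + b + 1 by ring]
    linarith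

lemma third_add_half_log_sub_log_le {x y : ℝ} (hx : 2 ≤ x) (hy : 1 ≤ y) :
    1 / 3 + (log x - log y) / 2 ≤ log (x + y - 1) - log y := by
  have hsq : 2 * x * y ≤ (x + y - 1) ^ 2 := by nlinarith [sq_nonneg (x - 1), sq_nonneg (y - 1)]
  have hlog := log_le_log (by positivity) hsq
  rw [log_pow, log_mul (by positivity) (by positivity), log_mul (by norm_num) (by positivity)]
    at hlog
  have hlog2 := log_two_gt_d9
  push_cast at hlog
  linarith

lemma third_add_half_log_sub_log_le_sum_inv {a : ℕ} (ha : 1 ≤ a) {b : ℝ} (hb : 0 ≤ b) :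
    1 / 3 + (log (a + 1) - log (b + 1)) / 2 ≤ ∑ j ∈ range a, 1 / ((a : ℝ) - j + b) := by
  have hkey := third_add_half_log_sub_log_le (x := a + 1) (y := b + 1)
    (by norm_cast; omega) (by linarith)
  rw [show (a : ℝ) + 1 + (b + 1) - 1 = a + b + 1 by ring] at hkey
  linarith [log_sub_log_le_sum_inv hb a]

end

namespace PlaneTree

open Real Finset

lemma heightList_le_iff {ts : List PlaneTree} {n : ℕ} :
    heightList ts ≤ n ↔ ∀ s ∈ ts, height s + 1 ≤ n := by
  induction ts with
  | nil => simp [heightList]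
  | cons s ts ih => simp [heightList, ih]

lemma level_eq_nil_iff {k : ℕ} {t : PlaneTree} : level k t = [] ↔ height t < k := by
  induction k generalizing t with
  | zero => simp [level]
  | succ k ih =>
    obtain ⟨ts⟩ := t
    simp only [level, children, List.flatMap_eq_nil_iff, ih, height, Nat.lt_succ_iff,
      heightList_le_iff, Nat.lt_iff_add_one_le]

lemma level_succ_eq_flatMap_children (k : ℕ) (t : PlaneTree) :
    level (k + 1) t = (level k t).flatMap children := by
  induction k generalizing t with
  | zero => simp [level]
  | succ k ih =>
    change (children t).flatMap (level (k + 1)) = ((children t).flatMap (level k)).flatMap children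
    rw [List.flatMap_assoc]
    exact congrArg (List.flatMap · _) (funext ih)

def levelSize (t : PlaneTree) (k : ℕ) : ℕ := (level k t).length

lemma sum_children_length_level (k : ℕ) (t : PlaneTree) :
    ((level k t).map (·.children.length)).sum = levelSize t (k + 1) := by
  rw [levelSize, level_succ_eq_flatMap_children, List.length_flatMap]

lemma levelSize_pos_iff {k : ℕ} {t : PlaneTree} : 0 < levelSize t k ↔ k ≤ height t := by
  rw [levelSize, List.length_pos_iff, Ne, level_eq_nil_iff, not_lt]

lemma levelSize_height_add_one (t : PlaneTree) : levelSize t (height t + 1) = 0 := by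
  rw [levelSize, level_eq_nil_iff.mpr (Nat.lt_succ_self _), List.length_nil]

def bfsPrefix (t : PlaneTree) (k : ℕ) : List PlaneTree :=
  (List.range k).flatMap (level · t)

lemma bfsPrefix_succ (t : PlaneTree) (k : ℕ) :
    bfsPrefix t (k + 1) = bfsPrefix t k ++ level k t := by
  simp [bfsPrefix, List.range_succ]

lemma length_bfsPrefix_succ (t : PlaneTree) (k : ℕ) :
    (bfsPrefix t (k + 1)).length = (bfsPrefix t k).length + levelSize t k := by
  rw [bfsPrefix_succ, List.length_append, levelSize]

lemma bfsList_eq_bfsPrefix (t : PlaneTree) : bfsList t = bfsPrefix t (height t + 1) := rfl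

lemma bfsPrefix_prefix (t : PlaneTree) {m n : ℕ} (hmn : m ≤ n) :
    bfsPrefix t m <+: bfsPrefix t n := by
  induction n, hmn using Nat.le_induction with
  | base => exact List.prefix_rfl
  | succ n _ ih => exact ih.trans (bfsPrefix_succ t n ▸ List.prefix_append _ _)

lemma sum_children_length_bfsPrefix (t : PlaneTree) (k : ℕ) :
    ((bfsPrefix t k).map (·.children.length)).sum + 1 = (bfsPrefix t (k + 1)).length := by
  induction k with
  | zero => rfl
  | succ k ih =>
    rw [bfsPrefix_succ, List.map_append, List.sum_append, sum_children_length_level,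
      length_bfsPrefix_succ (k := k + 1), ← ih]
    ring

lemma sum_map_children_length_sub_one (l : List PlaneTree) :
    (l.map fun v => (v.children.length : ℤ) - 1).sum =
      (((l.map (·.children.length)).sum : ℕ) : ℤ) - l.length := by
  induction l with
  | nil => simp
  | cons v l ih => simp only [List.map_cons, List.sum_cons, ih, List.length_cons]; push_cast; ring

lemma S_eq_sum_take {t : PlaneTree} {i : ℕ} (hi : i ≤ (bfsList t).length) :
    S t i = 1 + (((bfsList t).take i).map fun v => (v.children.length : ℤ) - 1).sum := by
  rw [S, sum_range_getD_eq_sum_take _ _ (fun v => (v.children.length : ℤ) - 1) hi]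

lemma S_bfsPrefix_length_add {t : PlaneTree} {k j : ℕ} (hk : k ≤ height t)
    (hj : j ≤ levelSize t k) :
    S t ((bfsPrefix t k).length + j) =
      (levelSize t k : ℤ) - j + ((((level k t).take j).map (·.children.length)).sum : ℕ) := by
  obtain ⟨rest, hrest⟩ := bfsPrefix_prefix t (show k + 1 ≤ height t + 1 by omega)
  rw [← bfsList_eq_bfsPrefix, bfsPrefix_succ, List.append_assoc] at hrest
  have htake : (bfsList t).take ((bfsPrefix t k).length + j) =
      bfsPrefix t k ++ (level k t).take j := by
    rw [← hrest, List.take_append, List.take_of_length_le (by omega), Nat.add_sub_cancel_left,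
      List.take_append_of_le_length hj]
  have hlen : (bfsPrefix t k).length + j ≤ (bfsList t).length := by
    rw [← hrest, List.length_append, List.length_append, ← levelSize]; omega
  have hchildren := sum_children_length_bfsPrefix t k
  rw [length_bfsPrefix_succ] at hchildren
  rw [S_eq_sum_take hlen, htake, List.map_append, List.sum_append,
    sum_map_children_length_sub_one, sum_map_children_length_sub_one, List.length_take_of_le hj]
  omega

lemma sum_range_length_bfsPrefix {M : Type*} [AddCommMonoid M] (t : PlaneTree) (g : ℕ → M)
    (K : ℕ) :
    ∑ i ∈ range (bfsPrefix t K).length, g i =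
      ∑ k ∈ range K, ∑ j ∈ range (levelSize t k), g ((bfsPrefix t k).length + j) := by
  induction K with
  | zero => rfl
  | succ K ih => rw [length_bfsPrefix_succ, sum_range_add, ih, sum_range_succ]

lemma third_add_half_log_sub_log_le_sum_inv_S {t : PlaneTree} {k : ℕ} (hk : k ≤ height t) :
    1 / 3 + (log (levelSize t k + 1) - log (levelSize t (k + 1) + 1)) / 2 ≤
      ∑ j ∈ range (levelSize t k), 1 / (S t ((bfsPrefix t k).length + j) : ℝ) := by
  refine (third_add_half_log_sub_log_le_sum_inv (levelSize_pos_iff.mpr hk)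
    (Nat.cast_nonneg _)).trans (sum_le_sum fun j hj => ?_)
  have hjk : j < levelSize t k := mem_range.mp hj
  rw [S_bfsPrefix_length_add hk hjk.le]
  set p := (((level k t).take j).map (·.children.length)).sum
  have hp : p ≤ levelSize t (k + 1) := by
    rw [← sum_children_length_level]
    exact ((List.take_sublist j _).map _).sum_le_sum fun _ _ => Nat.zero_le _
  have hj' : (j : ℝ) + 1 ≤ levelSize t k := by exact_mod_cast hjk
  have hp' : (p : ℝ) ≤ levelSize t (k + 1) := by exact_mod_cast hp
  have hp0 : (0 : ℝ) ≤ p := Nat.cast_nonneg p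
  simp only [Int.cast_add, Int.cast_sub, Int.cast_natCast]
  exact one_div_le_one_div_of_le (by linarith) (by linarith)

end PlaneTree

open PlaneTree in
theorem stmt2 (t : PlaneTree) :
    (height t : ℝ) ≤ 3 * ∑ i ∈ Finset.range (bfsList t).length, 1 / (S t i : ℝ) := by
  open Real Finset in
  set L : ℕ → ℝ := fun k => log (levelSize t k + 1)
  have hL_zero : 0 ≤ L 0 := log_nonneg (le_add_of_nonneg_left (Nat.cast_nonneg _))
  have hL_top : L (height t + 1) = 0 := by simp [L, levelSize_height_add_one]
  calc (height t : ℝ)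
      ≤ 3 * ((height t + 1) / 3 + (L 0 - L (height t + 1)) / 2) := by linarith
    _ = 3 * ∑ k ∈ range (height t + 1), (1 / 3 + (L k - L (k + 1)) / 2) := by
        rw [sum_add_distrib, sum_const, card_range, ← sum_div, sum_range_sub', nsmul_eq_mul]
        push_cast
        ring
    _ ≤ 3 * ∑ k ∈ range (height t + 1), ∑ j ∈ range (levelSize t k),
          1 / (S t ((bfsPrefix t k).length + j) : ℝ) := by
        gcongr with k hk
        exact third_add_half_log_sub_log_le_sum_inv_S (Nat.lt_succ_iff.mp (mem_range.mp hk))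
    _ = 3 * ∑ i ∈ range (bfsList t).length, 1 / (S t i : ℝ) := by
        rw [bfsList_eq_bfsPrefix, sum_range_length_bfsPrefix]
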